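/- arXiv:2012.04451 — 2 statements merged into one kernel-verified Lean document; each statement's English description precedes it below -/
import Mathlib

section
/- If {{-,-}} is a double Poisson bracket on an associative algebra A (so the associated triple bracket vanishes), then the associated single bracket {a,b} = m({{a,b}}) satisfies the Leibniz/Jacobi-type identity {a,{b,c}} = {{a,b},c} + {b,{a,c}} for all a,b,c in A. -/
/-!
STATEMENT 0: If {{-,-}} is a double Poisson bracket on an associative algebra A
(so the associated triple bracket vanishes), then the associated single bracket
{a,b} = m({{a,b}}) satisfies {a,{b,c}} = {{a,b},c} + {b,{a,c}}.
-/

open TensorProduct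

namespace Stmt0

variable {R A : Type*} [CommRing R] [Ring A] [Algebra R A]

/-- The cyclic permutation τ_(123) on A⊗A⊗A : x⊗y⊗z ↦ z⊗x⊗y. -/
noncomputable def cyc3 (R A : Type*) [CommRing R] [Ring A] [Algebra R A] :
    (A ⊗[R] A) ⊗[R] A →ₗ[R] (A ⊗[R] A) ⊗[R] A :=
  ((TensorProduct.assoc R A A A).symm.toLinearMap).comp
    (TensorProduct.comm R (A ⊗[R] A) A).toLinearMap

/-- The triple bracket associated to a binary operation `D`:
{{a,b,c}} = {{a,{{b,c}}}}_L + τ_(123){{b,{{c,a}}}}_L + τ_(132){{c,{{a,b}}}}_L,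
where {{a,u⊗v}}_L = {{a,u}}⊗v. -/
noncomputable def tripleBr (D : A →ₗ[R] A →ₗ[R] A ⊗[R] A) (a b c : A) :
    (A ⊗[R] A) ⊗[R] A :=
  LinearMap.rTensor A (D a) (D b c)
    + cyc3 R A (LinearMap.rTensor A (D b) (D c a))
    + cyc3 R A (cyc3 R A (LinearMap.rTensor A (D c) (D a b)))

/-- The single bracket {a,b} = m({{a,b}}) associated to `D`. -/
noncomputable def sb (D : A →ₗ[R] A →ₗ[R] A ⊗[R] A) (a b : A) : A :=
  LinearMap.mul' R A (D a b)


/-!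
The single bracket `{a,-}` is a derivation of `A`, so `{a,{b,c}} = m {a,{{b,c}}}` with `{a,-}`
acting on both tensor factors of `{{b,c}}`. By antisymmetry and the Leibniz rule, `{{a,b},c}` is
minus the image of `{{c,{{a,b}}}}_L + {{c,{{a,b}}°}}_L` under `(x ⊗ y) ⊗ z ↦ y z x`.
Multiplying out the vanishing triple brackets `{{a,b,c}}` and `{{b,a,c}}` gives two linear
relations between exactly these terms, and their sum is the claimed identity.
-/

open LinearMap

def IsDoubleDerivation (δ : A →ₗ[R] A ⊗[R] A) : Prop :=
  ∀ b c : A, δ (b * c) = δ b * (1 ⊗ₜ[R] c) + (b ⊗ₜ[R] 1) * δ c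

noncomputable def mul3 : (A ⊗[R] A) ⊗[R] A →ₗ[R] A :=
  mul' R A ∘ₗ rTensor A (mul' R A)

noncomputable def mulCyc : (A ⊗[R] A) ⊗[R] A →ₗ[R] A :=
  mul3 ∘ₗ cyc3 R A ∘ₗ cyc3 R A

@[simp]
lemma mulCyc_tmul (x y z : A) : mulCyc ((x ⊗ₜ[R] y) ⊗ₜ[R] z) = y * z * x := by
  simp [mulCyc, mul3, cyc3]

lemma mul3_rTensor (f : A →ₗ[R] A ⊗[R] A) (t : A ⊗[R] A) :
    mul3 (rTensor A f t) = mul' R A (rTensor A (mul' R A ∘ₗ f) t) := by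
  rw [mul3, comp_apply, rTensor_comp_apply]

lemma mul3_comp_cyc3 :
    mul3 ∘ₗ cyc3 R A = mul' R A ∘ₗ (TensorProduct.comm R A A).toLinearMap ∘ₗ
      rTensor A (mul' R A) :=
  TensorProduct.ext_threefold fun x y z => by simp [mul3, cyc3, mul_assoc]

lemma mul3_cyc3_rTensor (f : A →ₗ[R] A ⊗[R] A) (t : A ⊗[R] A) :
    mul3 (cyc3 R A (rTensor A f t)) =
      mul' R A (TensorProduct.comm R A A (rTensor A (mul' R A ∘ₗ f) t)) := by
  rw [← comp_apply, mul3_comp_cyc3, rTensor_comp_apply]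
  rfl

lemma mul'_mul_one_tmul (w : A ⊗[R] A) (v : A) :
    mul' R A (w * (1 ⊗ₜ[R] v)) = mul' R A w * v := by
  induction w using TensorProduct.induction_on with
  | zero => simp
  | tmul p q => simp [Algebra.TensorProduct.tmul_mul_tmul, mul_assoc]
  | add u w hu hw => rw [add_mul, map_add, hu, hw, map_add, add_mul]

lemma mul'_tmul_one_mul (u : A) (w : A ⊗[R] A) :
    mul' R A ((u ⊗ₜ[R] 1) * w) = u * mul' R A w := by
  induction w using TensorProduct.induction_on with
  | zero => simp
  | tmul p q => simp [Algebra.TensorProduct.tmul_mul_tmul, mul_assoc]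
  | add w w' hw hw' => rw [mul_add, map_add, hw, hw', map_add, mul_add]

lemma mul'_comm_mul_one_tmul (w : A ⊗[R] A) (v : A) :
    mul' R A (TensorProduct.comm R A A (w * (1 ⊗ₜ[R] v))) = mulCyc (w ⊗ₜ[R] v) := by
  induction w using TensorProduct.induction_on with
  | zero => simp
  | tmul p q => simp [Algebra.TensorProduct.tmul_mul_tmul, mul_assoc]
  | add u w hu hw => rw [add_mul, map_add, map_add, hu, hw, add_tmul, map_add]

lemma mul'_comm_tmul_one_mul (u : A) (w : A ⊗[R] A) :
    mul' R A (TensorProduct.comm R A A ((u ⊗ₜ[R] 1) * w)) = mulCyc (w ⊗ₜ[R] u) := by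
  induction w using TensorProduct.induction_on with
  | zero => simp
  | tmul p q => simp [Algebra.TensorProduct.tmul_mul_tmul, mul_assoc]
  | add w w' hw hw' => rw [mul_add, map_add, map_add, hw, hw', add_tmul, map_add]

lemma IsDoubleDerivation.mul'_apply_mul' {δ : A →ₗ[R] A ⊗[R] A} (hδ : IsDoubleDerivation δ)
    (t : A ⊗[R] A) :
    mul' R A (δ (mul' R A t)) =
      mul' R A (rTensor A (mul' R A ∘ₗ δ) t) + mul' R A (lTensor A (mul' R A ∘ₗ δ) t) := by
  induction t using TensorProduct.induction_on with
  | zero => simp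
  | tmul u v => simp [hδ u v, mul'_mul_one_tmul, mul'_tmul_one_mul]
  | add u v hu hv =>
    simp only [map_add, hu, hv]
    abel

lemma IsDoubleDerivation.mul'_comm_apply_mul' {δ : A →ₗ[R] A ⊗[R] A}
    (hδ : IsDoubleDerivation δ) (t : A ⊗[R] A) :
    mul' R A (TensorProduct.comm R A A (δ (mul' R A t))) =
      mulCyc (rTensor A δ t) + mulCyc (rTensor A δ (TensorProduct.comm R A A t)) := by
  induction t using TensorProduct.induction_on with
  | zero => simp
  | tmul u v => simp [hδ u v, mul'_comm_mul_one_tmul, mul'_comm_tmul_one_mul]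
  | add u v hu hv =>
    simp only [map_add, hu, hv]
    abel

lemma mul3_tripleBr (D : A →ₗ[R] A →ₗ[R] A ⊗[R] A)
    (hanti : ∀ a b : A, D a b = - (TensorProduct.comm R A A) (D b a)) (x y z : A) :
    mul3 (tripleBr D x y z) =
      mul' R A (rTensor A (mul' R A ∘ₗ D x) (D y z))
        - mul' R A (lTensor A (mul' R A ∘ₗ D y) (D x z))
        + mulCyc (rTensor A (D z) (D x y)) := by
  have hlTensor : TensorProduct.comm R A A (rTensor A (mul' R A ∘ₗ D y)
      (TensorProduct.comm R A A (D x z))) = lTensor A (mul' R A ∘ₗ D y) (D x z) :=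
    congr($(comm_comp_rTensor_comp_comm_eq _) (D x z))
  rw [tripleBr, map_add, map_add, mul3_rTensor, mul3_cyc3_rTensor, hanti z x, map_neg, map_neg,
    hlTensor, sub_eq_add_neg, map_neg]
  rfl

/-- The Leibniz/Jacobi identity for the single bracket of a double Poisson bracket. -/
theorem leibniz_of_doublePoisson
    (D : A →ₗ[R] A →ₗ[R] A ⊗[R] A)
    -- derivation in the second argument for the outer bimodule structure
    (hder : ∀ a b c : A, D a (b * c) = D a b * (1 ⊗ₜ[R] c) + (b ⊗ₜ[R] 1) * D a c)
    -- antisymmetry {{a,b}} = -{{b,a}}°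
    (hanti : ∀ a b : A, D a b = - (TensorProduct.comm R A A) (D b a))
    -- the associated triple bracket vanishes (double Poisson)
    (htriple : ∀ a b c : A, tripleBr D a b c = 0) :
    ∀ a b c : A, sb D a (sb D b c) = sb D (sb D a b) c + sb D b (sb D a c) := by
  intro a b c
  have hab := mul3_tripleBr D hanti a b c
  have hba := mul3_tripleBr D hanti b a c
  rw [htriple, map_zero] at hab hba
  rw [hanti b a, map_neg, map_neg] at hba
  have h_ab_c : sb D (sb D a b) c =
      -(mulCyc (rTensor A (D c) (D a b)) +
        mulCyc (rTensor A (D c) (TensorProduct.comm R A A (D a b)))) := by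
    rw [sb, sb, hanti _ c, map_neg, IsDoubleDerivation.mul'_comm_apply_mul' (hder c)]
  rw [h_ab_c, sb, sb, sb, sb, IsDoubleDerivation.mul'_apply_mul' (hder a),
    IsDoubleDerivation.mul'_apply_mul' (hder b)]
  linear_combination (norm := abel) hba - hab

end Stmt0
end

section
/- Let A = k⟨x,y⟩ with double Poisson bracket determined by {{x,y}} = 1⊗1, {{y,x}} = -1⊗1, {{x,x}} = {{y,y}} = 0. Then δ = xy - yx satisfies {{δ, a}} = a⊗1 - 1⊗a for all a ∈ A. -/
/-!
In the second argument a double bracket is an outer derivation, so `{{δ, -}}` and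
`a ↦ a ⊗ 1 - 1 ⊗ a` (the inner derivation of `1 ⊗ 1`) are two outer derivations of the free
algebra, and it suffices to compare them on the generators. There the Leibniz rule gives
`{{g, δ}} = g ⊗ 1 - 1 ⊗ g` for `g = x, y`, and antisymmetry turns this into `{{δ, g}}`, since
`g ⊗ 1 - 1 ⊗ g` is anti-invariant under the flip.
-/

open TensorProduct

namespace Stmt9

section OuterDerivation

variable {R A : Type*} [CommRing R] [Ring A] [Algebra R A]

/-- Leibniz rule for the outer bimodule structure `b • (u ⊗ v) • c = b u ⊗ v c` on `A ⊗ A`. -/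
def IsOuterDerivation (d : A →ₗ[R] A ⊗[R] A) : Prop :=
  ∀ b c : A, d (b * c) = d b * (1 ⊗ₜ c) + (b ⊗ₜ 1) * d c

namespace IsOuterDerivation

variable {d : A →ₗ[R] A ⊗[R] A}

theorem map_one (hd : IsOuterDerivation d) : d 1 = 0 := by
  have h := hd 1 1
  rw [mul_one, Algebra.TensorProduct.one_def.symm, mul_one, one_mul] at h
  exact left_eq_add.mp h

theorem map_algebraMap (hd : IsOuterDerivation d) (r : R) : d (algebraMap R A r) = 0 := by
  rw [Algebra.algebraMap_eq_smul_one, map_smul, hd.map_one, smul_zero]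

theorem map_mul_sub_mul (hd : IsOuterDerivation d) (b c : A) :
    d (b * c - c * b) =
      d b * (1 ⊗ₜ c) + (b ⊗ₜ 1) * d c - (d c * (1 ⊗ₜ b) + (c ⊗ₜ 1) * d b) := by
  rw [map_sub, hd, hd]

theorem ext_freeAlgebra {X : Type*}
    {d₁ d₂ : FreeAlgebra R X →ₗ[R] FreeAlgebra R X ⊗[R] FreeAlgebra R X}
    (h₁ : IsOuterDerivation d₁) (h₂ : IsOuterDerivation d₂)
    (h : ∀ i, d₁ (FreeAlgebra.ι R i) = d₂ (FreeAlgebra.ι R i)) : d₁ = d₂ := by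
  ext a
  induction a using FreeAlgebra.induction with
  | grade0 r => rw [h₁.map_algebraMap, h₂.map_algebraMap]
  | grade1 i => exact h i
  | mul a b ha hb => rw [h₁, h₂, ha, hb]
  | add a b ha hb => rw [map_add, map_add, ha, hb]

end IsOuterDerivation

variable (R A) in
def tmulOneSubOneTmul : A →ₗ[R] A ⊗[R] A :=
  (TensorProduct.mk R A A).flip 1 - TensorProduct.mk R A A 1

@[simp]
theorem tmulOneSubOneTmul_apply (a : A) :
    tmulOneSubOneTmul R A a = a ⊗ₜ 1 - 1 ⊗ₜ a :=
  rfl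

theorem isOuterDerivation_tmulOneSubOneTmul : IsOuterDerivation (tmulOneSubOneTmul R A) := by
  intro b c
  simp only [tmulOneSubOneTmul_apply, sub_mul, mul_sub, Algebra.TensorProduct.tmul_mul_tmul,
    one_mul, mul_one]
  abel

theorem neg_comm_tmul_one_sub_one_tmul (a : A) :
    -TensorProduct.comm R A A (a ⊗ₜ 1 - 1 ⊗ₜ a) = a ⊗ₜ 1 - 1 ⊗ₜ a := by
  rw [map_sub, comm_tmul, comm_tmul, neg_sub]

end OuterDerivation

theorem freeAlgebra_moment
    (k : Type*) [Field k]
    (D : FreeAlgebra k (Fin 2) →ₗ[k] FreeAlgebra k (Fin 2) →ₗ[k]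
        FreeAlgebra k (Fin 2) ⊗[k] FreeAlgebra k (Fin 2))
    -- derivation in the second argument for the outer bimodule structure
    (hder : ∀ a b c : FreeAlgebra k (Fin 2),
        D a (b * c) = D a b * (1 ⊗ₜ[k] c) + (b ⊗ₜ[k] 1) * D a c)
    -- antisymmetry {{a,b}} = -{{b,a}}°
    (hanti : ∀ a b : FreeAlgebra k (Fin 2),
        D a b = - (TensorProduct.comm k _ _) (D b a))
    -- values on the generators x = ι 0, y = ι 1
    (hxy : D (FreeAlgebra.ι k (0 : Fin 2)) (FreeAlgebra.ι k (1 : Fin 2)) = 1 ⊗ₜ[k] 1)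
    (hyx : D (FreeAlgebra.ι k (1 : Fin 2)) (FreeAlgebra.ι k (0 : Fin 2)) = -(1 ⊗ₜ[k] 1))
    (hxx : D (FreeAlgebra.ι k (0 : Fin 2)) (FreeAlgebra.ι k (0 : Fin 2)) = 0)
    (hyy : D (FreeAlgebra.ι k (1 : Fin 2)) (FreeAlgebra.ι k (1 : Fin 2)) = 0) :
    ∀ a : FreeAlgebra k (Fin 2),
      D (FreeAlgebra.ι k (0 : Fin 2) * FreeAlgebra.ι k (1 : Fin 2)
          - FreeAlgebra.ι k (1 : Fin 2) * FreeAlgebra.ι k (0 : Fin 2)) a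
        = a ⊗ₜ[k] 1 - 1 ⊗ₜ[k] a := by
  set x := FreeAlgebra.ι k (0 : Fin 2)
  set y := FreeAlgebra.ι k (1 : Fin 2)
  have hD : ∀ a, IsOuterDerivation (D a) := hder
  have swap : ∀ g, D g (x * y - y * x) = g ⊗ₜ 1 - 1 ⊗ₜ g →
      D (x * y - y * x) g = g ⊗ₜ 1 - 1 ⊗ₜ g := fun g h => by
    rw [hanti, h, neg_comm_tmul_one_sub_one_tmul]
  have hgen : ∀ i, D (x * y - y * x) (FreeAlgebra.ι k i) =
      tmulOneSubOneTmul k _ (FreeAlgebra.ι k i) := by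
    intro i
    fin_cases i
    · refine swap x ?_
      rw [(hD x).map_mul_sub_mul, hxx, hxy]
      simp
    · refine swap y ?_
      rw [(hD y).map_mul_sub_mul, hyx, hyy]
      simp [neg_add_eq_sub]
  intro a
  exact LinearMap.congr_fun
    ((hD _).ext_freeAlgebra isOuterDerivation_tmulOneSubOneTmul hgen) a

end Stmt9
end
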